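/- The partial quotient sequence of the ECF expansion is not a homogeneous Markov chain: one has P(B(1,1,2)) = 1/35, P(B(1,2,2)) = 1/44, P(B(2,2,2)) = 1/88, P(B(1,1,2,2)) = 1/133, P(B(1,2,2,2)) = 1/165 and P(B(2,2,2,2)) = 1/330, and hence P(b_4 = 2 | b_3 = 2, b_2 = 1, b_1 = 1) = 5/19 ≠ 972/3667 = P(b_4 = 2 | b_3 = 2), where the conditional probabilities are quotients P(A ∩ B)/P(B) of Lebesgue measures of the corresponding events. -/

import Mathlib

open MeasureTheory Set

/-- The Engel continued fraction map, with the convention `T_E 0 = 0`. -/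
noncomputable def ecfT (x : ℝ) : ℝ :=
  if x = 0 then 0 else (1 / (⌊1 / x⌋ : ℝ)) * (1 / x - (⌊1 / x⌋ : ℝ))

/-- The `n`-th partial quotient of the ECF expansion (`n ≥ 1`). -/
noncomputable def ecfB (n : ℕ) (x : ℝ) : ℤ := ⌊1 / (ecfT^[n - 1] x)⌋

/-- The cylinder `B(b_1, …, b_n)` associated to a finite block given as a list. -/
noncomputable def ecfCyl (l : List ℕ) : Set ℝ :=
  {x ∈ Set.Ioc (0 : ℝ) 1 | ∀ i : ℕ, ∀ h : i < l.length, ecfB (i + 1) x = (l.get ⟨i, h⟩ : ℤ)}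

/-!
On `ecfCyl [b] = (1/(b+1), 1/b]` the map `ecfT` is the decreasing Möbius map `x ↦ 1/(bx) - 1`,
whose inverse is `ecfBranch b`. So the cylinder of a non-decreasing block `b₁ ≤ ⋯ ≤ bₙ` is, up to
its endpoints, the interval obtained by pulling `(1/(bₙ+1), 1/bₙ]` back through the branches
`ecfBranch bₙ₋₁, …, ecfBranch b₁`, and its measure is an explicit rational. Since positive partial
quotients are non-decreasing, `{b₃ = 2}` is the disjoint union of the cylinders of `112`, `122`,
`222`, and `{b₃ = b₄ = 2}` that of `1122`, `1222`, `2222`; the conditional probabilities are then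
`35/133 = 5/19` and `(1/133 + 1/165 + 1/330) / (1/35 + 1/44 + 1/88) = 972/3667`.
-/

theorem ecfT_eq_fract_div (x : ℝ) : ecfT x = Int.fract (1 / x) / ⌊1 / x⌋ := by
  rw [ecfT, Int.fract]
  split_ifs with hx
  · simp [hx]
  · ring

theorem measurable_ecfT : Measurable ecfT := by
  rw [funext ecfT_eq_fract_div]
  fun_prop

theorem measurable_ecfB (n : ℕ) : Measurable (ecfB n) :=
  Int.measurable_floor.comp ((measurable_ecfT.iterate _).const_div 1)

theorem mem_ecfCyl_iff {l : List ℕ} {x : ℝ} :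
    x ∈ ecfCyl l ↔ x ∈ Ioc 0 1 ∧ ∀ i : Fin l.length, ecfB (i + 1) x = l.get i := by
  simp only [ecfCyl, mem_ofPred_eq, Fin.forall_iff]

theorem measurableSet_ecfCyl (l : List ℕ) : MeasurableSet (ecfCyl l) := by
  have : ecfCyl l = Ioc 0 1 ∩ ⋂ i : Fin l.length, ecfB (i + 1) ⁻¹' {(l.get i : ℤ)} := by
    ext x
    simp [mem_ecfCyl_iff]
  rw [this]
  exact measurableSet_Ioc.inter
    (.iInter fun i => measurable_ecfB _ (measurableSet_singleton _))

theorem disjoint_ecfCyl {l l' : List ℕ} (hlen : l.length = l'.length) (hne : l ≠ l') :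
    Disjoint (ecfCyl l) (ecfCyl l') := by
  refine Set.disjoint_left.2 fun x hx hx' => hne (List.ext_get hlen fun i h h' => ?_)
  exact_mod_cast ((mem_ecfCyl_iff.1 hx).2 ⟨i, h⟩).symm.trans ((mem_ecfCyl_iff.1 hx').2 ⟨i, h'⟩)

theorem ecfB_succ_succ (n : ℕ) (x : ℝ) : ecfB (n + 2) x = ecfB (n + 1) (ecfT x) := by
  show ⌊1 / ecfT^[n + 1] x⌋ = ⌊1 / ecfT^[n] (ecfT x)⌋
  rw [Function.iterate_succ_apply]

theorem mem_Ioc_of_one_le_floor_one_div {x : ℝ} (h : 1 ≤ ⌊1 / x⌋) : x ∈ Ioc 0 1 := by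
  have h1 : (1 : ℝ) ≤ 1 / x := by exact_mod_cast Int.le_floor.1 h
  have hx : 0 < x := one_div_pos.1 (one_pos.trans_le h1)
  exact ⟨hx, by rwa [le_one_div one_pos hx, div_one] at h1⟩

theorem floor_one_div_eq_iff {b : ℕ} (hb : 1 ≤ b) {x : ℝ} (hx : 0 < x) :
    ⌊1 / x⌋ = b ↔ x ∈ Ioc (1 / (b + 1 : ℝ)) (1 / b) := by
  have hb0 : (0 : ℝ) < b := by exact_mod_cast hb
  rw [Int.floor_eq_iff, mem_Ioc, and_comm]
  push_cast
  exact and_congr (one_div_lt hx (by positivity)) (le_one_div hb0 hx)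

theorem one_le_floor_one_div_and_le_of_ecfT {t : ℝ} (h : 1 ≤ ⌊1 / ecfT t⌋) :
    1 ≤ ⌊1 / t⌋ ∧ ⌊1 / t⌋ ≤ ⌊1 / ecfT t⌋ := by
  rw [ecfT_eq_fract_div, one_div_div] at h ⊢
  have hf1 := Int.fract_lt_one (1 / t)
  have hf0 := Int.fract_nonneg (1 / t)
  generalize Int.fract (1 / t) = f at *
  generalize ⌊1 / t⌋ = b at *
  have hbf : (1 : ℝ) ≤ b / f := by exact_mod_cast Int.le_floor.1 h
  have hf : 0 < f := hf0.lt_of_ne fun hf => by rw [← hf, div_zero] at hbf; norm_num at hbf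
  have hb : (0 : ℝ) < b := (div_pos_iff_of_pos_right hf).1 (one_pos.trans_le hbf)
  refine ⟨by exact_mod_cast hb, Int.le_floor.2 ?_⟩
  rw [le_div_iff₀ hf]
  nlinarith

theorem one_le_ecfB_and_le_succ {n : ℕ} {x : ℝ} (h : 1 ≤ ecfB (n + 2) x) :
    1 ≤ ecfB (n + 1) x ∧ ecfB (n + 1) x ≤ ecfB (n + 2) x := by
  change 1 ≤ ⌊1 / ecfT^[n + 1] x⌋ at h
  show 1 ≤ ⌊1 / ecfT^[n] x⌋ ∧ ⌊1 / ecfT^[n] x⌋ ≤ ⌊1 / ecfT^[n + 1] x⌋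
  rw [Function.iterate_succ_apply'] at h ⊢
  exact one_le_floor_one_div_and_le_of_ecfT h

theorem ecfCyl_singleton {b : ℕ} (hb : 1 ≤ b) : ecfCyl [b] = Ioc (1 / (b + 1 : ℝ)) (1 / b) := by
  have hb0 : (0 : ℝ) < b := by exact_mod_cast hb
  ext x
  simp only [mem_ecfCyl_iff, List.length_singleton, Fin.forall_fin_one]
  constructor
  · rintro ⟨hx, h⟩
    exact (floor_one_div_eq_iff hb hx.1).1 (by exact_mod_cast h)
  · intro hx
    have hx0 : 0 < x := lt_trans (by positivity) hx.1
    refine ⟨⟨hx0, hx.2.trans ?_⟩, by exact_mod_cast (floor_one_div_eq_iff hb hx0).2 hx⟩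
    rw [div_le_one hb0]
    exact_mod_cast hb

theorem ecfCyl_cons_cons (b : ℕ) {c : ℕ} (hc : 1 ≤ c) (l : List ℕ) :
    ecfCyl (b :: c :: l) = ecfCyl [b] ∩ ecfT ⁻¹' ecfCyl (c :: l) := by
  ext x
  have hTx : ecfB 1 (ecfT x) = c → ecfT x ∈ Ioc 0 1 := fun h =>
    mem_Ioc_of_one_le_floor_one_div (show 1 ≤ ecfB 1 (ecfT x) by rw [h]; exact_mod_cast hc)
  simp only [mem_ecfCyl_iff, List.length_cons, List.get_eq_getElem, Fin.forall_fin_succ,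
    Fin.coe_ofNat_eq_mod, Nat.zero_mod, zero_add, List.getElem_cons_zero, Fin.val_succ,
    ecfB_succ_succ, List.getElem_cons_succ, mem_inter_iff, List.length_nil, Fin.val_eq_zero,
    forall_const, mem_preimage] at hTx ⊢
  tauto

/-- The inverse of the branch of `ecfT` on `ecfCyl [b]`. -/
noncomputable def ecfBranch (b : ℕ) (y : ℝ) : ℝ := 1 / (b * (1 + y))

section Branch

variable {b : ℕ}

theorem ecfBranch_antitoneOn (hb : 1 ≤ b) : AntitoneOn (ecfBranch b) (Ici 0) := by
  intro u hu v _ huv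
  have hb0 : (0 : ℝ) < b := by exact_mod_cast hb
  have hu' : (0 : ℝ) ≤ u := hu
  unfold ecfBranch
  gcongr

theorem ecfBranch_zero : ecfBranch b 0 = 1 / b := by
  simp [ecfBranch]

theorem ecfBranch_one_div (hb : 1 ≤ b) : ecfBranch b (1 / b) = 1 / (b + 1) := by
  have hb0 : (b : ℝ) ≠ 0 := by positivity
  rw [ecfBranch, mul_add, mul_one_div_cancel hb0, mul_one]

theorem ecfT_eq_of_mem_ecfCyl_singleton (hb : 1 ≤ b) {x : ℝ} (hx : x ∈ ecfCyl [b]) :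
    ecfT x = 1 / (b * x) - 1 := by
  have hb0 : (b : ℝ) ≠ 0 := by positivity
  rw [ecfT, if_neg hx.1.1.ne', show ⌊1 / x⌋ = b from mod_cast (mem_ecfCyl_iff.1 hx).2 0]
  push_cast
  field_simp

theorem le_ecfT_iff (hb : 1 ≤ b) {x y : ℝ} (hx : x ∈ ecfCyl [b]) (hy : 0 ≤ y) :
    y ≤ ecfT x ↔ x ≤ ecfBranch b y := by
  have hbx : (0 : ℝ) < b * x := mul_pos (by exact_mod_cast hb) hx.1.1
  rw [ecfT_eq_of_mem_ecfCyl_singleton hb hx, ecfBranch, le_sub_iff_add_le, le_div_iff₀ hbx,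
    le_div_iff₀ (by positivity)]
  ring_nf

theorem ecfT_le_iff (hb : 1 ≤ b) {x y : ℝ} (hx : x ∈ ecfCyl [b]) (hy : 0 ≤ y) :
    ecfT x ≤ y ↔ ecfBranch b y ≤ x := by
  have hbx : (0 : ℝ) < b * x := mul_pos (by exact_mod_cast hb) hx.1.1
  rw [ecfT_eq_of_mem_ecfCyl_singleton hb hx, ecfBranch, sub_le_iff_le_add, div_le_iff₀ hbx,
    div_le_iff₀ (by positivity)]
  ring_nf

end Branch

/-- Cylinders are described only up to their endpoints, which carry no measure. -/
def AlmostIcc (s : Set ℝ) (a b : ℝ) : Prop := Ioo a b ⊆ s ∧ s ⊆ Icc a b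

theorem AlmostIcc.volume_eq {s : Set ℝ} {a b : ℝ} (h : AlmostIcc s a b) :
    volume s = ENNReal.ofReal (b - a) :=
  le_antisymm (Real.volume_Icc ▸ measure_mono h.2) (Real.volume_Ioo ▸ measure_mono h.1)

theorem AlmostIcc.inter_preimage_ecfT {s : Set ℝ} {u v : ℝ} (h : AlmostIcc s u v) {b : ℕ}
    (hb : 1 ≤ b) (hu : 0 ≤ u) (huv : u ≤ v) (hv : v ≤ 1 / b) :
    AlmostIcc (ecfCyl [b] ∩ ecfT ⁻¹' s) (ecfBranch b v) (ecfBranch b u) := by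
  have hv0 : 0 ≤ v := hu.trans huv
  constructor
  · rintro x ⟨hvx, hxu⟩
    have hx : x ∈ ecfCyl [b] := by
      rw [ecfCyl_singleton hb, ← ecfBranch_zero, ← ecfBranch_one_div hb]
      exact ⟨(ecfBranch_antitoneOn hb hv0 (by positivity : (0 : ℝ) ≤ 1 / b) hv).trans_lt hvx,
        hxu.le.trans (ecfBranch_antitoneOn hb self_mem_Ici hu hu)⟩
    refine ⟨hx, h.1 ⟨?_, ?_⟩⟩
    · exact lt_of_not_ge fun h' => hxu.not_ge ((ecfT_le_iff hb hx hu).1 h')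
    · exact lt_of_not_ge fun h' => hvx.not_ge ((le_ecfT_iff hb hx hv0).1 h')
  · rintro x ⟨hx, hxs⟩
    exact ⟨(ecfT_le_iff hb hx hv0).1 (h.2 hxs).2, (le_ecfT_iff hb hx hu).1 (h.2 hxs).1⟩

/-- The endpoints of the interval `ecfCyl l`; they swap at each step since `ecfBranch b` is
decreasing. -/
noncomputable def ecfCylEnds : List ℕ → ℝ × ℝ
  | [] => (0, 1)
  | [b] => (1 / (b + 1), 1 / b)
  | b :: c :: l => (ecfBranch b (ecfCylEnds (c :: l)).2, ecfBranch b (ecfCylEnds (c :: l)).1)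

theorem ecfCylEnds_bounds : ∀ {b : ℕ} {l : List ℕ}, 1 ≤ b → (b :: l).IsChain (· ≤ ·) →
    1 / (b + 1 : ℝ) ≤ (ecfCylEnds (b :: l)).1 ∧ (ecfCylEnds (b :: l)).1 ≤ (ecfCylEnds (b :: l)).2 ∧
      (ecfCylEnds (b :: l)).2 ≤ 1 / b
  | b, [], hb, _ => by
    refine ⟨le_rfl, ?_, le_rfl⟩
    have hb0 : (0 : ℝ) < b := by exact_mod_cast hb
    exact one_div_le_one_div_of_le hb0 (by linarith)
  | b, c :: l, hb, hl => by
    obtain ⟨hbc, hl⟩ := List.isChain_cons_cons.1 hl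
    have hc : 1 ≤ c := hb.trans hbc
    obtain ⟨hu, huv, hv⟩ := ecfCylEnds_bounds hc hl
    have hu0 : 0 ≤ (ecfCylEnds (c :: l)).1 := hu.trans' (by positivity)
    have hvb : (ecfCylEnds (c :: l)).2 ≤ 1 / b :=
      hv.trans (one_div_le_one_div_of_le (by positivity) (by exact_mod_cast hbc))
    have hanti := ecfBranch_antitoneOn hb
    rw [← ecfBranch_zero, ← ecfBranch_one_div hb]
    exact ⟨hanti (hu0.trans huv) (mem_Ici.2 (by positivity)) hvb, hanti hu0 (hu0.trans huv) huv,
      hanti self_mem_Ici hu0 hu0⟩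

theorem almostIcc_ecfCyl : ∀ {b : ℕ} {l : List ℕ}, 1 ≤ b → (b :: l).IsChain (· ≤ ·) →
    AlmostIcc (ecfCyl (b :: l)) (ecfCylEnds (b :: l)).1 (ecfCylEnds (b :: l)).2
  | b, [], hb, _ => by
    rw [ecfCyl_singleton hb]
    exact ⟨Ioo_subset_Ioc_self, Ioc_subset_Icc_self⟩
  | b, c :: l, hb, hl => by
    obtain ⟨hbc, hl⟩ := List.isChain_cons_cons.1 hl
    have hc : 1 ≤ c := hb.trans hbc
    obtain ⟨hu, huv, hv⟩ := ecfCylEnds_bounds hc hl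
    rw [ecfCyl_cons_cons b hc]
    have hu0 : 0 ≤ (ecfCylEnds (c :: l)).1 := hu.trans' (by positivity)
    exact (almostIcc_ecfCyl hc hl).inter_preimage_ecfT hb hu0 huv
      (hv.trans (one_div_le_one_div_of_le (by positivity) (by exact_mod_cast hbc)))

theorem volume_ecfCyl {b : ℕ} {l : List ℕ} (hb : 1 ≤ b) (hl : (b :: l).IsChain (· ≤ ·)) :
    volume (ecfCyl (b :: l)) = ENNReal.ofReal ((ecfCylEnds (b :: l)).2 - (ecfCylEnds (b :: l)).1) :=
  (almostIcc_ecfCyl hb hl).volume_eq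

theorem volume_ecfCyl_112 : volume (ecfCyl [1, 1, 2]) = (35 : ENNReal)⁻¹ := by
  rw [volume_ecfCyl le_rfl (by decide)]
  norm_num [ecfCylEnds, ecfBranch, ← one_div, ENNReal.ofReal_div_of_pos]

theorem volume_ecfCyl_122 : volume (ecfCyl [1, 2, 2]) = (44 : ENNReal)⁻¹ := by
  rw [volume_ecfCyl le_rfl (by decide)]
  norm_num [ecfCylEnds, ecfBranch, ← one_div, ENNReal.ofReal_div_of_pos]

theorem volume_ecfCyl_222 : volume (ecfCyl [2, 2, 2]) = (88 : ENNReal)⁻¹ := by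
  rw [volume_ecfCyl (by norm_num) (by decide)]
  norm_num [ecfCylEnds, ecfBranch, ← one_div, ENNReal.ofReal_div_of_pos]

theorem volume_ecfCyl_1122 : volume (ecfCyl [1, 1, 2, 2]) = (133 : ENNReal)⁻¹ := by
  rw [volume_ecfCyl le_rfl (by decide)]
  norm_num [ecfCylEnds, ecfBranch, ← one_div, ENNReal.ofReal_div_of_pos]

theorem volume_ecfCyl_1222 : volume (ecfCyl [1, 2, 2, 2]) = (165 : ENNReal)⁻¹ := by
  rw [volume_ecfCyl le_rfl (by decide)]
  norm_num [ecfCylEnds, ecfBranch, ← one_div, ENNReal.ofReal_div_of_pos]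

theorem volume_ecfCyl_2222 : volume (ecfCyl [2, 2, 2, 2]) = (330 : ENNReal)⁻¹ := by
  rw [volume_ecfCyl (by norm_num) (by decide)]
  norm_num [ecfCylEnds, ecfBranch, ← one_div, ENNReal.ofReal_div_of_pos]

theorem ecfB_one_two_of_ecfB_three_eq_two {x : ℝ} (h : ecfB 3 x = 2) :
    ecfB 1 x = 1 ∧ ecfB 2 x = 1 ∨ ecfB 1 x = 1 ∧ ecfB 2 x = 2 ∨ ecfB 1 x = 2 ∧ ecfB 2 x = 2 := by
  obtain ⟨h2, h23⟩ : 1 ≤ ecfB 2 x ∧ ecfB 2 x ≤ ecfB 3 x :=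
    one_le_ecfB_and_le_succ (by rw [h]; norm_num)
  obtain ⟨h1, h12⟩ : 1 ≤ ecfB 1 x ∧ ecfB 1 x ≤ ecfB 2 x := one_le_ecfB_and_le_succ h2
  omega

theorem setOf_ecfB_three_eq_two : {x ∈ Ioc (0 : ℝ) 1 | ecfB 3 x = 2} =
    ecfCyl [1, 1, 2] ∪ ecfCyl [1, 2, 2] ∪ ecfCyl [2, 2, 2] := by
  ext x
  have := @ecfB_one_two_of_ecfB_three_eq_two x
  simp only [mem_ofPred_eq, mem_union, mem_ecfCyl_iff, List.length_cons, List.length_nil,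
    List.get_eq_getElem, Fin.forall_fin_succ, Fin.coe_ofNat_eq_mod, Nat.zero_mod, zero_add,
    List.getElem_cons_zero, Nat.cast_one, Fin.val_succ, List.getElem_cons_succ, Fin.val_eq_zero,
    Nat.cast_ofNat, forall_const, Nat.reduceAdd]
  tauto

theorem setOf_ecfB_four_eq_two_and_three_eq_two :
    {x ∈ Ioc (0 : ℝ) 1 | ecfB 4 x = 2 ∧ ecfB 3 x = 2} =
      ecfCyl [1, 1, 2, 2] ∪ ecfCyl [1, 2, 2, 2] ∪ ecfCyl [2, 2, 2, 2] := by
  ext x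
  have := @ecfB_one_two_of_ecfB_three_eq_two x
  simp only [mem_ofPred_eq, mem_union, mem_ecfCyl_iff, List.length_cons, List.length_nil,
    List.get_eq_getElem, Fin.forall_fin_succ, Fin.coe_ofNat_eq_mod, Nat.zero_mod, zero_add,
    List.getElem_cons_zero, Nat.cast_one, Fin.val_succ, List.getElem_cons_succ, Fin.val_eq_zero,
    Nat.cast_ofNat, forall_const, Nat.reduceAdd]
  tauto

theorem volume_setOf_ecfB_three_eq_two :
    volume {x ∈ Ioc (0 : ℝ) 1 | ecfB 3 x = 2} = 35⁻¹ + 44⁻¹ + 88⁻¹ := by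
  rw [setOf_ecfB_three_eq_two, measure_union ?_ (measurableSet_ecfCyl _),
    measure_union ?_ (measurableSet_ecfCyl _), volume_ecfCyl_112, volume_ecfCyl_122,
    volume_ecfCyl_222]
  · exact disjoint_ecfCyl rfl (by decide)
  · exact Disjoint.union_left (disjoint_ecfCyl rfl (by decide)) (disjoint_ecfCyl rfl (by decide))

theorem volume_setOf_ecfB_four_eq_two_and_three_eq_two :
    volume {x ∈ Ioc (0 : ℝ) 1 | ecfB 4 x = 2 ∧ ecfB 3 x = 2} = 133⁻¹ + 165⁻¹ + 330⁻¹ := by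
  rw [setOf_ecfB_four_eq_two_and_three_eq_two, measure_union ?_ (measurableSet_ecfCyl _),
    measure_union ?_ (measurableSet_ecfCyl _), volume_ecfCyl_1122, volume_ecfCyl_1222,
    volume_ecfCyl_2222]
  · exact disjoint_ecfCyl rfl (by decide)
  · exact Disjoint.union_left (disjoint_ecfCyl rfl (by decide)) (disjoint_ecfCyl rfl (by decide))

/-- The ECF partial quotient sequence is not a homogeneous Markov chain: explicit cylinder
measures give `P(b_4 = 2 | b_3 = 2, b_2 = 1, b_1 = 1) = 5/19 ≠ 972/3667 = P(b_4 = 2 | b_3 = 2)`. -/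
theorem ecf_not_markov :
    volume (ecfCyl [1, 1, 2]) = (35 : ENNReal)⁻¹ ∧
    volume (ecfCyl [1, 2, 2]) = (44 : ENNReal)⁻¹ ∧
    volume (ecfCyl [2, 2, 2]) = (88 : ENNReal)⁻¹ ∧
    volume (ecfCyl [1, 1, 2, 2]) = (133 : ENNReal)⁻¹ ∧
    volume (ecfCyl [1, 2, 2, 2]) = (165 : ENNReal)⁻¹ ∧
    volume (ecfCyl [2, 2, 2, 2]) = (330 : ENNReal)⁻¹ ∧
    volume (ecfCyl [1, 1, 2, 2]) / volume (ecfCyl [1, 1, 2]) = (5 : ENNReal) / 19 ∧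
    volume {x ∈ Set.Ioc (0 : ℝ) 1 | ecfB 4 x = 2 ∧ ecfB 3 x = 2} /
        volume {x ∈ Set.Ioc (0 : ℝ) 1 | ecfB 3 x = 2} = (972 : ENNReal) / 3667 ∧
    (5 : ENNReal) / 19 ≠ (972 : ENNReal) / 3667 := by
  refine ⟨volume_ecfCyl_112, volume_ecfCyl_122, volume_ecfCyl_222, volume_ecfCyl_1122,
    volume_ecfCyl_1222, volume_ecfCyl_2222, ?_, ?_, ?_⟩
  · rw [volume_ecfCyl_1122, volume_ecfCyl_112,
      ← ENNReal.toReal_eq_toReal_iff' (by simp [ENNReal.div_eq_top]) (by simp [ENNReal.div_eq_top])]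
    norm_num [ENNReal.toReal_div, ENNReal.toReal_inv]
  · rw [volume_setOf_ecfB_four_eq_two_and_three_eq_two, volume_setOf_ecfB_three_eq_two,
      ← ENNReal.toReal_eq_toReal_iff' (by simp [ENNReal.div_eq_top]) (by simp [ENNReal.div_eq_top])]
    norm_num [ENNReal.toReal_div, ENNReal.toReal_add, ENNReal.toReal_inv]
  · rw [Ne, ← ENNReal.toReal_eq_toReal_iff' (by simp [ENNReal.div_eq_top])
      (by simp [ENNReal.div_eq_top])]
    norm_num [ENNReal.toReal_div]
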